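/- Fix an integer n > 1. For any real number α < 1/(n−1), one has m^α · (1 − δ(m,n)) → 0 as m → ∞. -/

import Mathlib

/-! Map a point `v` of the sphere to the vector of odd tents
`max 0 (r - ‖v - uᵢ‖) - max 0 (r - ‖v + uᵢ‖)`, where the `uᵢ` form an `r`-net of the sphere;
a volume count of disjoint balls shows that `(1 + 2/r)^n ≤ m` points suffice. If no two points of
`X` satisfy `‖x + y‖ < 2r`, every coordinate of this map has constant sign on `X` and no `f x`
vanishes, so a sign-weighted linear functional separates `0` from the convex hull of `f(X)`.
Hence the Borsuk property yields `x, y ∈ X` with `⟪x, y⟫ < 2r² - 1`, i.e. `1 - δ < 2r²`.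
With `r ≍ m^(-1/n)` this gives `1 - δ(m, n) = O(m^(-2/n))`, and `1/(n-1) ≤ 2/n`. -/

open Metric RealInnerProductSpace

/-- `BorsukSet m n` is the set of real numbers `δ ∈ (0, 1]` with the property that for
every continuous odd map `f : S^{n-1} → ℝ^{m+n-1}` there is a finite subset `X` of the
sphere `S^{n-1}` of cardinality at most `m+n` and geodesic diameter at most
`π - arccos δ` such that `0` lies in the convex hull of `f(X)`.  The number `δ(m,n)` of
the paper is the least element of this set. -/
def BorsukSet (m n : ℕ) : Set ℝ :=
  {δ : ℝ | δ ∈ Set.Ioc (0 : ℝ) 1 ∧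
    ∀ f : EuclideanSpace ℝ (Fin n) → EuclideanSpace ℝ (Fin (m + n - 1)),
      ContinuousOn f (sphere 0 1) →
      (∀ v ∈ sphere (0 : EuclideanSpace ℝ (Fin n)) 1, f (-v) = -f v) →
      ∃ X : Finset (EuclideanSpace ℝ (Fin n)),
        ↑X ⊆ sphere (0 : EuclideanSpace ℝ (Fin n)) 1 ∧
        X.card ≤ m + n ∧
        (∀ x ∈ X, ∀ y ∈ X, Real.arccos ⟪x, y⟫ ≤ Real.pi - Real.arccos δ) ∧
        (0 : EuclideanSpace ℝ (Fin (m + n - 1))) ∈ convexHull ℝ (f '' ↑X)}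

open Module MeasureTheory Filter Topology

section Net

variable {E : Type*} [NormedAddCommGroup E] [NormedSpace ℝ E] [FiniteDimensional ℝ E]

open scoped Function in
theorem card_le_of_separated_of_norm_le (s : Finset E) {ε : ℝ} (hε : 0 < ε)
    (hs : ∀ c ∈ s, ‖c‖ ≤ 1) (h : ∀ c ∈ s, ∀ d ∈ s, c ≠ d → ε ≤ ‖c - d‖) :
    (s.card : ℝ) ≤ (1 + 2 / ε) ^ finrank ℝ E := by
  borelize E
  let μ : Measure E := Measure.addHaar
  have hε2 : 0 < ε / 2 := half_pos hε
  have hρ : 0 < 1 + ε / 2 := by linarith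
  have hdisj : (s : Set E).Pairwise (Disjoint on fun c => ball c (ε / 2)) :=
    fun c hc d hd hcd => ball_disjoint_ball (by rw [dist_eq_norm]; linarith [h c hc d hd hcd])
  have hsub : ⋃ c ∈ s, ball c (ε / 2) ⊆ ball (0 : E) (1 + ε / 2) :=
    Set.iUnion₂_subset fun c hc => ball_subset_ball' (by rw [dist_zero_right]; linarith [hs c hc])
  have hvol : (s.card : ENNReal) * ENNReal.ofReal ((ε / 2) ^ finrank ℝ E) * μ (ball 0 1) ≤
      ENNReal.ofReal ((1 + ε / 2) ^ finrank ℝ E) * μ (ball 0 1) :=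
    calc (s.card : ENNReal) * ENNReal.ofReal ((ε / 2) ^ finrank ℝ E) * μ (ball 0 1)
        = μ (⋃ c ∈ s, ball c (ε / 2)) := by
          rw [measure_biUnion_finset hdisj fun c _ => measurableSet_ball]
          simp only [μ.addHaar_ball_of_pos _ hε2, Finset.sum_const, nsmul_eq_mul, mul_assoc]
      _ ≤ μ (ball 0 (1 + ε / 2)) := measure_mono hsub
      _ = ENNReal.ofReal ((1 + ε / 2) ^ finrank ℝ E) * μ (ball 0 1) := μ.addHaar_ball_of_pos _ hρ
  have hvol' := ENNReal.toReal_le_of_le_ofReal (by positivity)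
    ((ENNReal.mul_le_mul_iff_left (measure_ball_pos μ _ one_pos).ne' measure_ball_lt_top.ne).1 hvol)
  rw [ENNReal.toReal_mul, ENNReal.toReal_ofReal (by positivity), ENNReal.toReal_natCast] at hvol'
  calc (s.card : ℝ) = s.card * (ε / 2) ^ finrank ℝ E / (ε / 2) ^ finrank ℝ E := by field_simp
    _ ≤ (1 + ε / 2) ^ finrank ℝ E / (ε / 2) ^ finrank ℝ E := by gcongr
    _ = (1 + 2 / ε) ^ finrank ℝ E := by rw [← div_pow]; congr 1; field_simp; ring

theorem exists_fin_net_of_norm_le {A : Set E} (hA : ∀ a ∈ A, ‖a‖ ≤ 1) (hne : A.Nonempty)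
    {ε : ℝ} (hε : 0 < ε) {N : ℕ} (hN : (1 + 2 / ε) ^ finrank ℝ E ≤ N) :
    ∃ u : Fin N → E, ∀ a ∈ A, ∃ i, ‖a - u i‖ < ε := by
  classical
  let IsPacking (T : Finset E) : Prop :=
    ↑T ⊆ A ∧ ∀ c ∈ T, ∀ d ∈ T, c ≠ d → ε ≤ ‖c - d‖
  have hcard {T : Finset E} (hT : IsPacking T) : T.card ≤ N := by
    exact_mod_cast (card_le_of_separated_of_norm_le T hε (fun c hc => hA c (hT.1 hc)) hT.2).trans hN
  let sizes : Set ℕ := {k | ∃ T, IsPacking T ∧ T.card = k}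
  have hbdd : BddAbove sizes := ⟨N, by rintro _ ⟨T, hT, rfl⟩; exact hcard hT⟩
  obtain ⟨T, hT, hTcard⟩ : sSup sizes ∈ sizes :=
    Nat.sSup_mem ⟨0, ∅, ⟨by simp, by simp⟩, rfl⟩ hbdd
  -- a packing of maximal size is a net
  have hnet : ∀ a ∈ A, ∃ t ∈ T, ‖a - t‖ < ε := by
    by_contra! ⟨a, ha, hfar⟩
    have haT : a ∉ T := fun h => by simpa using (hfar a h).trans_lt' hε
    have hins : IsPacking (insert a T) := by
      refine ⟨by simpa [Set.insert_subset_iff] using ⟨ha, hT.1⟩, ?_⟩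
      simp only [Finset.mem_insert]
      rintro c (rfl | hc) d (rfl | hd) hcd
      · exact absurd rfl hcd
      · exact hfar d hd
      · rw [norm_sub_rev]; exact hfar c hc
      · exact hT.2 c hc d hd hcd
    have := le_csSup hbdd ⟨_, hins, rfl⟩
    rw [Finset.card_insert_of_notMem haT] at this
    omega
  have : Nonempty T := by
    obtain ⟨a, ha⟩ := hne
    obtain ⟨t, ht, -⟩ := hnet a ha
    exact ⟨⟨t, ht⟩⟩
  obtain ⟨j⟩ : Nonempty (T ↪ Fin N) :=
    Function.Embedding.nonempty_of_card_le (by simpa using hcard hT)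
  let pick : Fin N → T := Function.invFun j
  refine ⟨fun i => pick i, fun a ha => ?_⟩
  obtain ⟨t, ht, hat⟩ := hnet a ha
  obtain ⟨i, hi⟩ := Function.invFun_surjective j.injective ⟨t, ht⟩
  exact ⟨i, by simpa [pick, hi] using hat⟩

end Net

theorem zero_notMem_convexHull_of_coord_sign {ι : Type*} [Fintype ι]
    {S : Set (EuclideanSpace ℝ ι)} (hsign : ∀ i, (∀ z ∈ S, 0 ≤ z i) ∨ ∀ z ∈ S, z i ≤ 0)
    (h0 : (0 : EuclideanSpace ℝ ι) ∉ S) : (0 : EuclideanSpace ℝ ι) ∉ convexHull ℝ S := by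
  have hsign' (i) : ∃ c : ℝ, c ≠ 0 ∧ ∀ z ∈ S, 0 ≤ z i * c := by
    rcases hsign i with h | h
    · exact ⟨1, one_ne_zero, fun z hz => by simpa using h z hz⟩
    · exact ⟨-1, by norm_num, fun z hz => by simpa using h z hz⟩
  choose c hc0 hc using hsign'
  have hpos : S ⊆ {z | 0 < ⟪WithLp.toLp 2 c, z⟫} := by
    intro z hz
    obtain ⟨i, hi⟩ : ∃ i, z i ≠ 0 := by
      by_contra! h
      exact h0 (by convert hz; ext i; exact (h i).symm)
    simp only [Set.mem_ofPred_eq, PiLp.inner_apply, RCLike.inner_apply, conj_trivial]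
    exact Finset.sum_pos' (fun j _ => hc j z hz)
      ⟨i, Finset.mem_univ i, (hc i z hz).lt_of_ne' (mul_ne_zero hi (hc0 i))⟩
  intro h
  simpa using convexHull_min hpos (convex_halfSpace_gt (innerₛₗ ℝ (WithLp.toLp 2 c)).isLinear 0) h

section Tent

variable {E : Type*} [NormedAddCommGroup E] {ι : Type*}

def antipodalTent (r : ℝ) (u v : E) : ℝ := max 0 (r - ‖v - u‖) - max 0 (r - ‖v + u‖)

def tentMap (r : ℝ) (u : ι → E) (v : E) : EuclideanSpace ℝ ι :=
  WithLp.toLp 2 fun i => antipodalTent r (u i) v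

variable {r : ℝ} {u v : E}

theorem continuous_antipodalTent : Continuous (antipodalTent r u) := by
  unfold antipodalTent; fun_prop

theorem antipodalTent_neg : antipodalTent r u (-v) = -antipodalTent r u v := by
  rw [antipodalTent, antipodalTent, show -v - u = -(v + u) by abel,
    show -v + u = -(v - u) by abel, norm_neg, norm_neg]
  ring

theorem antipodalTent_nonneg (h : r ≤ ‖v + u‖) : 0 ≤ antipodalTent r u v := by
  simp [antipodalTent, max_eq_left (sub_nonpos.2 h)]

theorem antipodalTent_nonpos (h : r ≤ ‖v - u‖) : antipodalTent r u v ≤ 0 := by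
  simp [antipodalTent, max_eq_left (sub_nonpos.2 h)]

theorem antipodalTent_pos [NormedSpace ℝ E] (hv : ‖v‖ = 1) (hr : r ≤ 1) (h : ‖v - u‖ < r) :
    0 < antipodalTent r u v := by
  have : 2 ≤ ‖v + u‖ + ‖v - u‖ := by
    simpa [hv, ← two_smul ℝ v, norm_smul] using norm_add_le (v + u) (v - u)
  rw [antipodalTent, max_eq_right (by linarith), max_eq_left (by linarith)]
  linarith

theorem continuous_tentMap [Fintype ι] (u : ι → E) : Continuous (tentMap r u) :=
  (PiLp.continuous_toLp 2 _).comp (continuous_pi fun _ => continuous_antipodalTent)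

theorem tentMap_neg (u : ι → E) (v : E) : tentMap r u (-v) = -tentMap r u v := by
  ext i; simp [tentMap, antipodalTent_neg]

theorem exists_norm_add_lt_of_zero_mem_convexHull [NormedSpace ℝ E] [Fintype ι] (hr : r ≤ 1)
    {u : ι → E} {X : Set E} (hX : ∀ x ∈ X, ‖x‖ = 1) (hcover : ∀ x ∈ X, ∃ i, ‖x - u i‖ < r)
    (h0 : 0 ∈ convexHull ℝ (tentMap r u '' X)) : ∃ x ∈ X, ∃ y ∈ X, ‖x + y‖ < 2 * r := by
  by_contra! hfar
  refine zero_notMem_convexHull_of_coord_sign (fun i => ?_) ?_ h0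
  · simp only [Set.forall_mem_image, tentMap]
    by_cases hneg : ∃ y ∈ X, antipodalTent r (u i) y < 0
    · obtain ⟨y, hy, hy0⟩ := hneg
      have hyu : ‖y + u i‖ < r := by
        by_contra! h; exact (antipodalTent_nonneg h).not_gt hy0
      refine Or.inr fun x hx => antipodalTent_nonpos ?_
      have := (hfar x hx y hy).trans
        (by simpa using norm_add_le (x - u i) (y + u i) : ‖x + y‖ ≤ ‖x - u i‖ + ‖y + u i‖)
      linarith
    · push Not at hneg
      exact Or.inl hneg
  · rintro ⟨x, hx, hx0⟩
    obtain ⟨i, hi⟩ := hcover x hx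
    have hxi : antipodalTent r (u i) x = 0 := congrArg (fun z : EuclideanSpace ℝ ι => z i) hx0
    exact (antipodalTent_pos (hX x hx) hr hi).ne' hxi

end Tent

section Borsuk

variable {E : Type*} [NormedAddCommGroup E] [InnerProductSpace ℝ E]

theorem neg_le_of_arccos_le_pi_sub_arccos {a δ : ℝ} (ha : -1 ≤ a) (hδ : -1 ≤ δ)
    (h : Real.arccos a ≤ Real.pi - Real.arccos δ) : -δ ≤ a := by
  by_contra! hlt
  rw [← Real.arccos_neg] at h
  exact (Real.arccos_lt_arccos ha hlt (by linarith)).not_ge h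

theorem inner_lt_of_norm_add_lt {x y : E} {r : ℝ} (hx : ‖x‖ = 1) (hy : ‖y‖ = 1)
    (h : ‖x + y‖ < 2 * r) : ⟪x, y⟫ < 2 * r ^ 2 - 1 := by
  have := norm_add_sq_real x y
  nlinarith [norm_nonneg (x + y)]

theorem one_sub_le_of_mem_borsukSet {m n : ℕ} (hn : 0 < n) {δ r : ℝ} (hδ : δ ∈ BorsukSet m n)
    (hr0 : 0 < r) (hr1 : r ≤ 1) (hm : (1 + 2 / r) ^ n ≤ m) : 1 - δ ≤ 2 * r ^ 2 := by
  obtain ⟨⟨hδpos, -⟩, hδf⟩ := hδ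
  obtain ⟨u, hu⟩ := exists_fin_net_of_norm_le (A := sphere (0 : EuclideanSpace ℝ (Fin n)) 1)
    (fun a ha => (mem_sphere_zero_iff_norm.1 ha).le) ⟨EuclideanSpace.single ⟨0, hn⟩ 1, by simp⟩ hr0
    (N := m + n - 1) (by rw [finrank_euclideanSpace_fin]; exact hm.trans (by norm_cast; omega))
  obtain ⟨X, hXs, -, hdiam, h0⟩ :=
    hδf (tentMap r u) (continuous_tentMap u).continuousOn fun v _ => tentMap_neg u v
  have hX : ∀ x ∈ (X : Set _), ‖x‖ = 1 := fun x hx => mem_sphere_zero_iff_norm.1 (hXs hx)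
  obtain ⟨x, hx, y, hy, hxy⟩ :=
    exists_norm_add_lt_of_zero_mem_convexHull hr1 hX (fun x hx => hu x (hXs hx)) h0
  have hlow : -δ ≤ ⟪x, y⟫ := by
    refine neg_le_of_arccos_le_pi_sub_arccos ?_ (by linarith) (hdiam x hx y hy)
    simpa [hX x hx, hX y hy] using neg_le_of_abs_le (abs_real_inner_le_norm x y)
  linarith [inner_lt_of_norm_add_lt (hX x hx) (hX y hy) hxy]

theorem one_sub_le_rpow_of_mem_borsukSet {m n : ℕ} (hn : 0 < n) (hm : 3 ^ n ≤ m) {δ : ℝ}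
    (hδ : δ ∈ BorsukSet m n) : 1 - δ ≤ 18 * (m : ℝ) ^ (-(2 / n : ℝ)) := by
  have hm0 : (0 : ℝ) < m := by exact_mod_cast (by positivity : 0 < 3 ^ n).trans_le hm
  set p : ℝ := (m : ℝ) ^ (n⁻¹ : ℝ) with hp
  have hpn : p ^ n = m := Real.rpow_inv_natCast_pow hm0.le hn.ne'
  have hp3 : 3 ≤ p := by
    rw [← Real.pow_rpow_inv_natCast (by norm_num : (0 : ℝ) ≤ 3) hn.ne']
    exact Real.rpow_le_rpow (by positivity) (by exact_mod_cast hm) (by positivity)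
  have hr := one_sub_le_of_mem_borsukSet hn hδ (r := 3 / p) (by positivity)
    ((div_le_one (by positivity)).2 hp3) (by
      rw [← hpn]
      gcongr
      rw [div_div_eq_mul_div]
      linarith)
  have hp2 : (m : ℝ) ^ (2 / n : ℝ) = p ^ 2 := by
    rw [hp, ← Real.rpow_natCast, ← Real.rpow_mul hm0.le]
    congr 1
    push_cast
    ring
  calc 1 - δ ≤ 2 * (3 / p) ^ 2 := hr
    _ = 18 * (m : ℝ) ^ (-(2 / n : ℝ)) := by
      rw [Real.rpow_neg hm0.le, hp2]
      ring

end Borsuk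

theorem stmt19 (n : ℕ) (hn : 1 < n) (α : ℝ) (hα : α < 1 / ((n : ℝ) - 1))
    (d : ℕ → ℝ) (hd : ∀ m, 1 ≤ m → IsLeast (BorsukSet m n) (d m)) :
    Filter.Tendsto (fun m : ℕ => (m : ℝ) ^ α * (1 - d m)) Filter.atTop (nhds 0) := by
  have hn' : (2 : ℝ) ≤ n := by exact_mod_cast hn
  have hα2 : α < 2 / n :=
    hα.trans_le (by rw [div_le_div_iff₀ (by linarith) (by linarith)]; linarith)
  have hlim : Tendsto (fun m : ℕ => 18 * (m : ℝ) ^ (α + -(2 / n : ℝ))) atTop (𝓝 0) := by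
    have := ((tendsto_rpow_neg_atTop (sub_pos.2 hα2)).comp tendsto_natCast_atTop_atTop).const_mul 18
    simpa [neg_sub, sub_eq_add_neg] using this
  refine squeeze_zero' ?_ ?_ hlim
  · filter_upwards [eventually_ge_atTop 1] with m hm
    exact mul_nonneg (by positivity) (sub_nonneg.2 (hd m hm).1.1.2)
  · filter_upwards [eventually_ge_atTop (3 ^ n)] with m hm
    have hm1 : 1 ≤ m := (Nat.one_le_pow _ _ three_pos).trans hm
    have hm0 : (0 : ℝ) < m := by exact_mod_cast hm1
    calc (m : ℝ) ^ α * (1 - d m) ≤ (m : ℝ) ^ α * (18 * (m : ℝ) ^ (-(2 / n : ℝ))) :=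
          mul_le_mul_of_nonneg_left
            (one_sub_le_rpow_of_mem_borsukSet (by omega) hm (hd m hm1).1) (by positivity)
      _ = 18 * (m : ℝ) ^ (α + -(2 / n : ℝ)) := by rw [Real.rpow_add hm0]; ring
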